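/- arXiv:2509.04924 — 2 statements merged into one kernel-verified Lean document; each statement's English description precedes it below -/
import Mathlib

section
/- Let c₂ > 0, c₃ > 0, U₀ > 4c₂/c₃, and let W : [0, T] → ℝ be continuous satisfying W(t) ≥ ∫₀ᵗ c₃/(1 + c₂ s)⁵ · W(s)² ds + U₀ for all t ∈ [0, T]. Then 1/U₀ ≥ c₃/(4c₂) − c₃/(4c₂(1 + c₂T)⁴); in particular T is bounded: T ≤ (1/c₂)·((1 − 4c₂/(c₃U₀))^{-1/4} − 1). -/
/-!
Set `V t = U₀ + ∫₀ᵗ k W²` with `k s = c₃ / (1 + c₂ s)⁵`. Then `V' = k W² ≥ k V²`, so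
`1 / V + ∫₀ᵗ k` is antitone; comparing its values at `0` and `T` and using `1 / V(T) > 0` gives
`∫₀ᵀ k < 1 / U₀`. The integral of `k` is explicit, and solving the resulting inequality for `T`
gives the bound on `T`.
-/

open MeasureTheory Set

theorem hasDerivAt_integral_of_continuousOn_Icc {f : ℝ → ℝ} {a b t : ℝ}
    (hf : ContinuousOn f (Icc a b)) (ht : t ∈ Ioo a b) :
    HasDerivAt (fun u => ∫ s in a..u, f s) (f t) t :=
  intervalIntegral.integral_hasDerivAt_right
    ((hf.mono (Icc_subset_Icc_right ht.2.le)).intervalIntegrable_of_Icc ht.1.le)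
    ((hf.mono Ioo_subset_Icc_self).stronglyMeasurableAtFilter isOpen_Ioo t ht)
    (hf.continuousAt (Icc_mem_nhds ht.1 ht.2))

theorem continuousOn_integral_of_continuousOn_Icc {f : ℝ → ℝ} {a b : ℝ} (hab : a ≤ b)
    (hf : ContinuousOn f (Icc a b)) :
    ContinuousOn (fun u => ∫ s in a..u, f s) (Icc a b) := by
  simpa only [uIcc_of_le hab] using
    intervalIntegral.continuousOn_primitive_interval (a := a) (b := b)
      (by simpa only [uIcc_of_le hab] using hf.integrableOn_Icc)

theorem integral_lt_inv_of_le_add_integral_mul_sq {k W : ℝ → ℝ} {a b U₀ : ℝ} (hab : a ≤ b)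
    (hU₀ : 0 < U₀) (hk : ContinuousOn k (Icc a b)) (hk_nonneg : ∀ s ∈ Icc a b, 0 ≤ k s)
    (hW : ContinuousOn W (Icc a b))
    (hineq : ∀ t ∈ Icc a b, (∫ s in a..t, k s * W s ^ 2) + U₀ ≤ W t) :
    ∫ s in a..b, k s < U₀⁻¹ := by
  set V : ℝ → ℝ := fun t => (∫ s in a..t, k s * W s ^ 2) + U₀
  have hkW : ContinuousOn (fun s => k s * W s ^ 2) (Icc a b) := hk.mul (hW.pow 2)
  have hV_pos : ∀ t ∈ Icc a b, 0 < V t := fun t ht => by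
    have : 0 ≤ ∫ s in a..t, k s * W s ^ 2 := intervalIntegral.integral_nonneg ht.1 fun s hs =>
      mul_nonneg (hk_nonneg s ⟨hs.1, hs.2.trans ht.2⟩) (sq_nonneg _)
    exact add_pos_of_nonneg_of_pos this hU₀
  have hV_cont : ContinuousOn V (Icc a b) :=
    (continuousOn_integral_of_continuousOn_Icc hab hkW).add continuousOn_const
  have hanti : AntitoneOn (fun t => (V t)⁻¹ + ∫ s in a..t, k s) (Icc a b) := by
    refine antitoneOn_of_hasDerivWithinAt_nonpos (convex_Icc a b)
      ((hV_cont.inv₀ fun t ht => (hV_pos t ht).ne').add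
        (continuousOn_integral_of_continuousOn_Icc hab hk))
      (f' := fun t => -(k t * W t ^ 2) / V t ^ 2 + k t) (fun t ht => ?_) (fun t ht => ?_)
    all_goals
      rw [interior_Icc] at ht
      have hVt := hV_pos t (Ioo_subset_Icc_self ht)
    · exact ((((hasDerivAt_integral_of_continuousOn_Icc hkW ht).add_const U₀).inv
        hVt.ne').add (hasDerivAt_integral_of_continuousOn_Icc hk ht)).hasDerivWithinAt
    · have hVW : V t ^ 2 ≤ W t ^ 2 :=
        pow_le_pow_left₀ hVt.le (hineq t (Ioo_subset_Icc_self ht)) 2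
      have hk_le : k t ≤ k t * W t ^ 2 / V t ^ 2 := by
        rw [le_div_iff₀ (by positivity)]
        exact mul_le_mul_of_nonneg_left hVW (hk_nonneg t (Ioo_subset_Icc_self ht))
      rw [neg_div]
      linarith
  have hVb := hV_pos b ⟨hab, le_rfl⟩
  have hends := hanti ⟨le_rfl, hab⟩ ⟨hab, le_rfl⟩ hab
  simp only [intervalIntegral.integral_same, zero_add, V] at hends
  linarith [inv_pos.mpr hVb]

theorem integral_div_one_add_mul_pow_five (d : ℝ) {c T : ℝ} (hc : 0 < c) (hT : 0 < 1 + c * T) :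
    ∫ s in (0:ℝ)..T, d / (1 + c * s) ^ 5 = d / (4 * c) - d / (4 * c * (1 + c * T) ^ 4) := by
  have hpos : ∀ x ∈ uIcc 0 T, 0 < 1 + c * x := fun x hx => by
    have : c * min 0 T ≤ c * x := mul_le_mul_of_nonneg_left hx.1 hc.le
    rcases min_cases 0 T with ⟨h, -⟩ | ⟨h, -⟩ <;> rw [h] at this <;> linarith
  have hderiv : ∀ x ∈ uIcc 0 T, HasDerivAt (fun x => -d * (4 * c * (1 + c * x) ^ 4)⁻¹)
      (d / (1 + c * x) ^ 5) x := fun x hx => by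
    have hx := (hpos x hx).ne'
    have hlin : HasDerivAt (fun x => 1 + c * x) c x := by
      simpa using ((hasDerivAt_id x).const_mul c).const_add 1
    refine ((((hlin.fun_pow 4).const_mul (4 * c)).fun_inv (by positivity)).const_mul (-d)).congr_deriv ?_
    field_simp
    ring
  rw [intervalIntegral.integral_eq_sub_of_hasDerivAt hderiv
    (continuousOn_const.div (by fun_prop) fun x hx => pow_ne_zero 5 (hpos x hx).ne').intervalIntegrable]
  simp only [mul_zero, add_zero, one_pow, mul_one, div_eq_mul_inv]
  ring

theorem le_div_mul_rpow_sub_one_of_sub_div_le {c₂ c₃ U₀ T : ℝ} (hc₂ : 0 < c₂) (hc₃ : 0 < c₃)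
    (hU₀ : 4 * c₂ / c₃ < U₀) (hT : 0 < 1 + c₂ * T)
    (h : c₃ / (4 * c₂) - c₃ / (4 * c₂ * (1 + c₂ * T) ^ 4) ≤ 1 / U₀) :
    T ≤ (1 / c₂) * ((1 - 4 * c₂ / (c₃ * U₀)) ^ (-(1/4 : ℝ)) - 1) := by
  set x := 1 + c₂ * T
  have hU₀_pos : 0 < U₀ := (by positivity : 0 < 4 * c₂ / c₃).trans hU₀
  have hB : 0 < 1 - 4 * c₂ / (c₃ * U₀) :=
    sub_pos.2 ((div_lt_one (by positivity)).2 ((div_lt_iff₀' hc₃).1 hU₀))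
  have hBx : 1 - 4 * c₂ / (c₃ * U₀) ≤ (x ^ 4)⁻¹ :=
    calc 1 - 4 * c₂ / (c₃ * U₀) = 1 - 4 * c₂ / c₃ * (1 / U₀) := by field_simp
      _ ≤ 1 - 4 * c₂ / c₃ * (c₃ / (4 * c₂) - c₃ / (4 * c₂ * x ^ 4)) := by gcongr
      _ = (x ^ 4)⁻¹ := by field_simp; ring
  have hxB : x ≤ (1 - 4 * c₂ / (c₃ * U₀)) ^ (-(1/4 : ℝ)) := by
    rw [Real.rpow_neg hB.le, ← Real.inv_rpow hB.le, show (1/4 : ℝ) = 4⁻¹ by norm_num,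
      Real.le_rpow_inv_iff_of_pos hT.le (inv_nonneg.2 hB.le) (by norm_num),
      show (4 : ℝ) = (4 : ℕ) by norm_num, Real.rpow_natCast]
    exact (le_inv_comm₀ hB (by positivity)).1 hBx
  rw [one_div, inv_mul_eq_div, le_div_iff₀ hc₂]
  linarith

theorem stmt_7 (c₂ c₃ U₀ T : ℝ) (hc₂ : 0 < c₂) (hc₃ : 0 < c₃)
    (hU₀ : U₀ > 4 * c₂ / c₃) (hT : 0 ≤ T)
    (W : ℝ → ℝ) (hW : ContinuousOn W (Icc 0 T))
    (hineq : ∀ t ∈ Icc (0:ℝ) T,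
      W t ≥ (∫ s in (0:ℝ)..t, c₃ / (1 + c₂ * s) ^ 5 * W s ^ 2) + U₀) :
    1 / U₀ ≥ c₃ / (4 * c₂) - c₃ / (4 * c₂ * (1 + c₂ * T) ^ 4) ∧
      T ≤ (1 / c₂) * ((1 - 4 * c₂ / (c₃ * U₀)) ^ (-(1/4 : ℝ)) - 1) := by
  have hU₀_pos : 0 < U₀ := (by positivity : 0 < 4 * c₂ / c₃).trans hU₀
  have hden : ∀ s ∈ Icc (0:ℝ) T, 0 < 1 + c₂ * s := fun s hs => by nlinarith [hs.1]
  have hk : ContinuousOn (fun s => c₃ / (1 + c₂ * s) ^ 5) (Icc 0 T) :=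
    continuousOn_const.div (by fun_prop) fun s hs => pow_ne_zero 5 (hden s hs).ne'
  have hbound : c₃ / (4 * c₂) - c₃ / (4 * c₂ * (1 + c₂ * T) ^ 4) ≤ 1 / U₀ := by
    rw [← integral_div_one_add_mul_pow_five c₃ hc₂ (hden T ⟨hT, le_rfl⟩), one_div]
    exact (integral_lt_inv_of_le_add_integral_mul_sq hT hU₀_pos hk
      (fun s hs => (div_pos hc₃ (pow_pos (hden s hs) 5)).le) hW hineq).le
  exact ⟨hbound, le_div_mul_rpow_sub_one_of_sub_div_le hc₂ hc₃ hU₀ (hden T ⟨hT, le_rfl⟩) hbound⟩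
end

section
/- Let λ > 0, c₂ > 0, c₃ > 0, and suppose W : [0, T] → ℝ is C¹, W(0) = W₀, W'(t) ≥ c₃(1 + c₂ t)^{-5} W(t)² − h(t) for all t ∈ [0,T] where h : [0,T] → ℝ is continuous, nonnegative, and ∫₀ᵗ h(s) ds ≤ K for all t. If W₀ − K > 4c₂/c₃, then T < ∞ with the explicit bound T ≤ (1/c₂)((1 − 4c₂/(c₃(W₀ − K)))^{-1/4} − 1). -/
/-!
Adding the primitive of the forcing term to `W` gives `V = W + ∫₀ᵗ h` with
`V' ≥ c₃ (1 + c₂ t)⁻⁵ W² ≥ 0`, so `U = V - K` is nondecreasing, `U ≥ W₀ - K > 0`, and `U ≤ W`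
because `∫₀ᵗ h ≤ K`. Hence `U' ≥ c₃ (1 + c₂ t)⁻⁵ U²`, i.e. `(1 / U)' ≤ -c₃ (1 + c₂ t)⁻⁵`.
Integrating over `[0, T]` and using `1 / U(T) > 0` gives
`c₃ / (4 c₂) · (1 - (1 + c₂ T)⁻⁴) < 1 / (W₀ - K)`, which is the bound on `T`.
-/

open MeasureTheory Set

theorem monotoneOn_Icc_of_hasDerivAt_nonneg {f f' : ℝ → ℝ} {a b : ℝ}
    (hf : ∀ t ∈ Icc a b, HasDerivAt f (f' t) t) (hf' : ∀ t ∈ Icc a b, 0 ≤ f' t) :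
    MonotoneOn f (Icc a b) :=
  monotoneOn_of_hasDerivWithinAt_nonneg (convex_Icc a b)
    (fun t ht => (hf t ht).continuousAt.continuousWithinAt)
    (fun t ht => (hf t (interior_subset ht)).hasDerivWithinAt)
    (fun t ht => hf' t (interior_subset ht))

theorem antitoneOn_Icc_of_hasDerivAt_nonpos {f f' : ℝ → ℝ} {a b : ℝ}
    (hf : ∀ t ∈ Icc a b, HasDerivAt f (f' t) t) (hf' : ∀ t ∈ Icc a b, f' t ≤ 0) :
    AntitoneOn f (Icc a b) :=
  antitoneOn_of_hasDerivWithinAt_nonpos (convex_Icc a b)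
    (fun t ht => (hf t ht).continuousAt.continuousWithinAt)
    (fun t ht => (hf t (interior_subset ht)).hasDerivWithinAt)
    (fun t ht => hf' t (interior_subset ht))

theorem ContinuousOn.exists_continuous_eqOn_Icc {f : ℝ → ℝ} {a b : ℝ} (hab : a ≤ b)
    (hf : ContinuousOn f (Icc a b)) : ∃ g : ℝ → ℝ, Continuous g ∧ EqOn g f (Icc a b) :=
  ⟨IccExtend hab ((Icc a b).domRestrict f),
    continuous_IccExtend_iff.2 (continuousOn_iff_continuous_domRestrict.1 hf),
    fun _ ht => IccExtend_of_mem hab _ ht⟩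

/-- Riccati comparison: `1 / U + Φ` has derivative `g - U' / U ^ 2 ≤ 0`, and `1 / U b > 0`. -/
theorem sub_lt_inv_of_mul_sq_le_deriv {U U' Φ g : ℝ → ℝ} {a b : ℝ} (hab : a ≤ b)
    (hU : ∀ t ∈ Icc a b, HasDerivAt U (U' t) t) (hΦ : ∀ t ∈ Icc a b, HasDerivAt Φ (g t) t)
    (hpos : ∀ t ∈ Icc a b, 0 < U t) (hineq : ∀ t ∈ Icc a b, g t * U t ^ 2 ≤ U' t) :
    Φ b - Φ a < (U a)⁻¹ := by
  have hanti : AntitoneOn (fun t => (U t)⁻¹ + Φ t) (Icc a b) := by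
    refine antitoneOn_Icc_of_hasDerivAt_nonpos
      (fun t ht => ((hU t ht).inv (hpos t ht).ne').add (hΦ t ht)) fun t ht => ?_
    rw [neg_div, neg_add_nonpos_iff, le_div_iff₀ (pow_pos (hpos t ht) 2)]
    exact hineq t ht
  have hba : (U b)⁻¹ + Φ b ≤ (U a)⁻¹ + Φ a :=
    hanti (left_mem_Icc.2 hab) (right_mem_Icc.2 hab) hab
  linarith [inv_pos.2 (hpos b (right_mem_Icc.2 hab))]

theorem sub_lt_inv_sub_of_forced_riccati {W W' h g Φ : ℝ → ℝ} {a b K : ℝ} (hab : a ≤ b)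
    (hW : ∀ t ∈ Icc a b, HasDerivAt W (W' t) t) (hh : ContinuousOn h (Icc a b))
    (hhK : ∀ t ∈ Icc a b, ∫ s in a..t, h s ≤ K)
    (hΦ : ∀ t ∈ Icc a b, HasDerivAt Φ (g t) t) (hg : ∀ t ∈ Icc a b, 0 ≤ g t)
    (hineq : ∀ t ∈ Icc a b, g t * W t ^ 2 - h t ≤ W' t) (hK : K < W a) :
    Φ b - Φ a < (W a - K)⁻¹ := by
  obtain ⟨h', hh'c, hh'⟩ := hh.exists_continuous_eqOn_Icc hab
  set U := fun t => W t + (∫ s in a..t, h' s) - K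
  have hUa : U a = W a - K := by simp [U]
  have hU : ∀ t ∈ Icc a b, HasDerivAt U (W' t + h' t) t := fun t ht =>
    ((hW t ht).add (hh'c.integral_hasStrictDerivAt a t).hasDerivAt).sub_const K
  have hUW : ∀ t ∈ Icc a b, U t ≤ W t := fun t ht => by
    have : ∫ s in a..t, h' s = ∫ s in a..t, h s := intervalIntegral.integral_congr fun s hs => by
      rw [uIcc_of_le ht.1] at hs
      exact hh' ⟨hs.1, hs.2.trans ht.2⟩
    linarith [hhK t ht]
  have hUpos : ∀ t ∈ Icc a b, 0 < U t := by
    have hmono : MonotoneOn U (Icc a b) := monotoneOn_Icc_of_hasDerivAt_nonneg hU fun t ht => by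
      rw [hh' ht]
      nlinarith [hineq t ht, hg t ht, sq_nonneg (W t)]
    intro t ht
    linarith [hmono (left_mem_Icc.2 hab) ht ht.1]
  rw [← hUa]
  refine sub_lt_inv_of_mul_sq_le_deriv hab hU hΦ hUpos fun t ht => ?_
  rw [hh' ht]
  have := mul_le_mul_of_nonneg_left (pow_le_pow_left₀ (hUpos t ht).le (hUW t ht) 2) (hg t ht)
  linarith [hineq t ht]

theorem hasDerivAt_neg_inv_mul_inv_one_add_mul_pow {c t : ℝ} {n : ℕ} (hn : n ≠ 0) (hc : c ≠ 0)
    (ht : 1 + c * t ≠ 0) :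
    HasDerivAt (fun s => -((n * c)⁻¹ * ((1 + c * s) ^ n)⁻¹)) ((1 + c * t) ^ (n + 1))⁻¹ t := by
  have hlin : HasDerivAt (fun s => 1 + c * s) c t := by
    simpa using ((hasDerivAt_id t).const_mul c).const_add 1
  refine (((hlin.fun_pow n).inv (pow_ne_zero n ht)).const_mul (n * c)⁻¹).neg.congr_deriv ?_
  obtain ⟨m, rfl⟩ := Nat.exists_eq_add_one_of_ne_zero hn
  simp only [Nat.add_sub_cancel]
  field_simp
  ring

theorem le_rpow_neg_inv_of_mul_pow_le_one {a x : ℝ} {n : ℕ} (hn : n ≠ 0) (ha : 0 < a)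
    (hx : 0 ≤ x) (h : a * x ^ n ≤ 1) : x ≤ a ^ (-(n⁻¹ : ℝ)) := by
  have hxn : x ^ n ≤ a⁻¹ := by rwa [← one_div, le_div_iff₀' ha]
  calc x = (x ^ n) ^ (n⁻¹ : ℝ) := (Real.pow_rpow_inv_natCast hx hn).symm
    _ ≤ a⁻¹ ^ (n⁻¹ : ℝ) := by gcongr
    _ = a ^ (-(n⁻¹ : ℝ)) := by rw [Real.inv_rpow ha.le, Real.rpow_neg ha.le]

theorem le_of_one_sub_inv_pow_four_lt {c₂ c₃ U₀ T : ℝ} (hc₂ : 0 < c₂) (hc₃ : 0 < c₃)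
    (hT : 0 ≤ T) (hU₀ : 4 * c₂ / c₃ < U₀)
    (h : c₃ * (4 * c₂)⁻¹ * (1 - ((1 + c₂ * T) ^ 4)⁻¹) < U₀⁻¹) :
    T ≤ (1 / c₂) * ((1 - 4 * c₂ / (c₃ * U₀)) ^ (-(1/4 : ℝ)) - 1) := by
  have hU₀pos : 0 < U₀ := lt_trans (by positivity) hU₀
  have hx : 0 < 1 + c₂ * T := by positivity
  have ha : 0 < 1 - 4 * c₂ / (c₃ * U₀) := by
    rw [sub_pos, div_lt_one (by positivity)]
    rwa [div_lt_iff₀ hc₃, mul_comm U₀] at hU₀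
  have hax : (1 - 4 * c₂ / (c₃ * U₀)) * (1 + c₂ * T) ^ 4 ≤ 1 := by
    set P := (1 + c₂ * T) ^ 4
    have hP : 0 < P := by positivity
    have key : c₃ * (P - 1) * U₀ < 4 * c₂ * P := by
      field_simp at h
      linarith
    rw [← sub_nonneg]
    field_simp
    nlinarith
  have := le_rpow_neg_inv_of_mul_pow_le_one (n := 4) four_ne_zero ha hx.le hax
  rw [one_div_mul_eq_div, le_div_iff₀ hc₂]
  norm_num at this
  linarith

theorem stmt_19_general (c₂ c₃ K W₀ T : ℝ) (hc₂ : 0 < c₂) (hc₃ : 0 < c₃) (hT : 0 ≤ T)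
    (W h : ℝ → ℝ) (hW : ContDiff ℝ 1 W) (hW0 : W 0 = W₀)
    (hh : ContinuousOn h (Icc 0 T))
    (hhK : ∀ t ∈ Icc (0:ℝ) T, (∫ s in (0:ℝ)..t, h s) ≤ K)
    (hineq : ∀ t ∈ Icc (0:ℝ) T,
      deriv W t ≥ c₃ / (1 + c₂ * t) ^ 5 * W t ^ 2 - h t)
    (hbig : W₀ - K > 4 * c₂ / c₃) :
    T ≤ (1 / c₂) * ((1 - 4 * c₂ / (c₃ * (W₀ - K))) ^ (-(1/4 : ℝ)) - 1) := by
  have hbase : ∀ t ∈ Icc (0:ℝ) T, 0 < 1 + c₂ * t := fun t ht => by nlinarith [ht.1]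
  have hΦ : ∀ t ∈ Icc (0:ℝ) T, HasDerivAt (fun s => c₃ * -((4 * c₂)⁻¹ * ((1 + c₂ * s) ^ 4)⁻¹))
      (c₃ / (1 + c₂ * t) ^ 5) t := fun t ht => by
    simpa [div_eq_mul_inv] using (hasDerivAt_neg_inv_mul_inv_one_add_mul_pow (n := 4)
      four_ne_zero hc₂.ne' (hbase t ht).ne').const_mul c₃
  have hK : K < W 0 := by rw [hW0]; linarith [show 0 < 4 * c₂ / c₃ by positivity]
  have hblow := sub_lt_inv_sub_of_forced_riccati hT
    (fun t _ => ((hW.differentiable one_ne_zero) t).hasDerivAt) hh hhK hΦ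
    (fun t ht => by have := hbase t ht; positivity) (fun t ht => by linarith [hineq t ht]) hK
  refine le_of_one_sub_inv_pow_four_lt hc₂ hc₃ hT hbig ?_
  rw [← hW0]
  convert hblow using 1
  simp only [mul_zero, add_zero, one_pow, inv_one, mul_one]
  ring

theorem stmt_19 (c₂ c₃ K W₀ T : ℝ) (hc₂ : 0 < c₂) (hc₃ : 0 < c₃) (hT : 0 ≤ T)
    (W h : ℝ → ℝ) (hW : ContDiff ℝ 1 W) (hW0 : W 0 = W₀)
    (hh : ContinuousOn h (Icc 0 T)) (hhpos : ∀ t ∈ Icc (0:ℝ) T, 0 ≤ h t)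
    (hhK : ∀ t ∈ Icc (0:ℝ) T, (∫ s in (0:ℝ)..t, h s) ≤ K)
    (hineq : ∀ t ∈ Icc (0:ℝ) T,
      deriv W t ≥ c₃ / (1 + c₂ * t) ^ 5 * W t ^ 2 - h t)
    (hbig : W₀ - K > 4 * c₂ / c₃) :
    T ≤ (1 / c₂) * ((1 - 4 * c₂ / (c₃ * (W₀ - K))) ^ (-(1/4 : ℝ)) - 1) :=
  stmt_19_general c₂ c₃ K W₀ T hc₂ hc₃ hT W h hW hW0 hh hhK hineq hbig
end
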